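/- arXiv:2504.17566 — 3 statements merged into one kernel-verified Lean document; each statement's English description precedes it below -/
import Mathlib

section
/- Let W be a Banach space and U a separable Hilbert space, T > 0, and let G : [0,T] → L(W) be strongly continuous with G(0) = I, sup_{t∈[0,T]} ‖G(t)‖ ≤ N, G(t) compact for every t ∈ (0,T], and t ↦ G(t) operator-norm continuous on (0,T]. Let B ∈ L(U;W), λ > 0, and ζ, ζ₁ ∈ W. Consider the cost functional H(w,u) = ‖w(T) − ζ₁‖_W² + λ ∫₀ᵀ ‖u(t)‖_U² dt over the admissible class A_ad = {(w,u) : u ∈ L²([0,T];U) and w(t) = G(t)ζ + ∫₀ᵗ G(t−s)B u(s) ds for all t ∈ [0,T]}. Then the minimization problem min_{(w,u)∈A_ad} H(w,u) possesses a unique optimal pair (w⁰, u⁰) ∈ A_ad. -/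
/-!
The control-to-endpoint map `u ↦ ∫₀ᵀ G(T - s) B u(s) ds` is a bounded operator
`K : L²(0,T; U) → W`, since its kernel is bounded by `N ‖B‖`. In terms of `f ∈ L²`, the cost is
`J f = ‖(G(T)ζ - ζ₁) + K f‖² + λ ‖f‖²`, a continuous `2λ`-strongly convex function on a Hilbert
space. For such a function the midpoint inequality makes every minimizing sequence Cauchy, so
its limit is a minimizer, and strict convexity makes the minimizer unique; uniqueness in `L²`
is uniqueness of the control almost everywhere.
-/

open MeasureTheory Set Filter Topology
open scoped ENNReal

section StrongConvexity

variable {E : Type*} [NormedAddCommGroup E] [NormedSpace ℝ E] {f : E → ℝ} {m : ℝ}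

lemma StrongConvexOn.midpoint_add_le (hf : StrongConvexOn univ m f) (x y : E) :
    f ((2⁻¹ : ℝ) • (x + y)) + m / 8 * ‖x - y‖ ^ 2 ≤ (f x + f y) / 2 := by
  have h := hf.2 (mem_univ x) (mem_univ y) (by norm_num : (0 : ℝ) ≤ 2⁻¹)
    (by norm_num : (0 : ℝ) ≤ 2⁻¹) (by norm_num)
  rw [smul_add]
  simp only [smul_eq_mul] at h
  linarith

/-- The minimizing sequence is Cauchy because, by the midpoint inequality, two points whose
values are within `ε` of the infimum are at distance at most `√(8 ε / m)`. -/
theorem StrongConvexOn.exists_isMinOn [CompleteSpace E] (hm : 0 < m)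
    (hf : StrongConvexOn univ m f) (hlsc : LowerSemicontinuous f) (hbdd : BddBelow (range f)) :
    ∃ x, IsMinOn f univ x := by
  have hle : ∀ x, ⨅ y, f y ≤ f x := ciInf_le hbdd
  choose s hs using fun n : ℕ => exists_lt_of_ciInf_lt
    (lt_add_of_pos_right (⨅ y, f y) (Nat.one_div_pos_of_nat (α := ℝ) (n := n)))
  have hdist : ∀ n k N : ℕ, N ≤ n → N ≤ k → dist (s n) (s k) ≤ √(8 / m * (1 / (N + 1))) := by
    intro n k N hn hk
    have hmid := hf.midpoint_add_le (s n) (s k)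
    have hinf := hle ((2⁻¹ : ℝ) • (s n + s k))
    have hn' : 1 / ((n : ℝ) + 1) ≤ 1 / ((N : ℝ) + 1) := Nat.one_div_le_one_div hn
    have hk' : 1 / ((k : ℝ) + 1) ≤ 1 / ((N : ℝ) + 1) := Nat.one_div_le_one_div hk
    rw [dist_eq_norm]
    refine Real.le_sqrt_of_sq_le ?_
    rw [div_mul_eq_mul_div, le_div_iff₀ hm]
    linarith [hs n, hs k]
  have hb : Tendsto (fun N : ℕ => √(8 / m * (1 / (N + 1)))) atTop (𝓝 0) := by
    simpa using (tendsto_one_div_add_atTop_nhds_zero_nat.const_mul (8 / m)).sqrt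
  obtain ⟨x, hx⟩ := cauchySeq_tendsto_of_complete (cauchySeq_of_le_tendsto_0 _ hdist hb)
  have hx_le : f x ≤ ⨅ y, f y := by
    refine le_of_forall_pos_le_add fun ε hε => ?_
    have hev : ∀ᶠ n in atTop, s n ∈ f ⁻¹' Iic ((⨅ y, f y) + ε) :=
      (tendsto_one_div_add_atTop_nhds_zero_nat.eventually (gt_mem_nhds hε)).mono
        fun n hn => ((hs n).trans (by linarith)).le
    exact (hlsc.isClosed_preimage _).mem_of_tendsto hx hev
  exact ⟨x, fun y _ => hx_le.trans (hle y)⟩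

theorem StrongConvexOn.existsUnique_isMinOn [CompleteSpace E] (hm : 0 < m)
    (hf : StrongConvexOn univ m f) (hlsc : LowerSemicontinuous f) (hbdd : BddBelow (range f)) :
    ∃! x, IsMinOn f univ x := by
  obtain ⟨x, hx⟩ := hf.exists_isMinOn hm hlsc hbdd
  exact ⟨x, hx, fun y hy => (hf.strictConvexOn hm).eq_of_isMinOn hy hx (mem_univ y) (mem_univ x)⟩

end StrongConvexity

section Tikhonov

variable {E F : Type*} [NormedAddCommGroup E] [InnerProductSpace ℝ E]
  [NormedAddCommGroup F] [NormedSpace ℝ F]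

lemma strongConvexOn_norm_add_sq_add_mul_norm_sq (K : E →ₗ[ℝ] F) (c : F) (lam : ℝ) :
    StrongConvexOn univ (2 * lam) fun x => ‖c + K x‖ ^ 2 + lam * ‖x‖ ^ 2 := by
  rw [strongConvexOn_iff_convex]
  have hconv : ConvexOn ℝ univ fun x => ‖c + K x‖ :=
    convexOn_univ_norm.comp_affineMap (AffineMap.const ℝ E c + K.toAffineMap)
  refine (hconv.pow (fun x _ => norm_nonneg _) 2).congr fun x _ => ?_
  simp only [Pi.pow_apply]
  ring

theorem existsUnique_isMinOn_norm_add_sq_add_mul_norm_sq [CompleteSpace E] (K : E →L[ℝ] F)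
    (c : F) {lam : ℝ} (hlam : 0 < lam) :
    ∃! x, IsMinOn (fun x => ‖c + K x‖ ^ 2 + lam * ‖x‖ ^ 2) univ x := by
  refine (strongConvexOn_norm_add_sq_add_mul_norm_sq K.toLinearMap c lam).existsUnique_isMinOn
    (by positivity) ?_ ⟨0, ?_⟩
  · exact (((continuous_const.add K.continuous).norm.pow 2).add
      (continuous_const.mul (continuous_norm.pow 2))).lowerSemicontinuous
  · rintro _ ⟨x, rfl⟩
    positivity

end Tikhonov

section KernelIntegral

variable {α U W : Type*} [MeasurableSpace α] {μ : Measure α} [IsFiniteMeasure μ]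
  [NormedAddCommGroup U] {p : ℝ≥0∞}

lemma MeasureTheory.MemLp.integral_norm_le {f : α → U} (hp : 1 ≤ p) (hf : MemLp f p μ) :
    ∫ a, ‖f a‖ ∂μ ≤ (μ univ).toReal ^ (1 - 1 / p.toReal) * (eLpNorm f p μ).toReal := by
  have hexp : 0 ≤ 1 - 1 / p.toReal := by
    rw [sub_nonneg, one_div, ← ENNReal.toReal_inv]
    exact ENNReal.toReal_le_of_le_ofReal zero_le_one (by simpa using ENNReal.inv_le_one.2 hp)
  have hL1 := eLpNorm_le_eLpNorm_mul_rpow_measure_univ hp hf.1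
  rw [ENNReal.toReal_one, div_one] at hL1
  rw [integral_norm_eq_lintegral_enorm hf.1, ← eLpNorm_one_eq_lintegral_enorm, mul_comm,
    ENNReal.toReal_rpow, ← ENNReal.toReal_mul]
  exact ENNReal.toReal_mono
    (ENNReal.mul_ne_top hf.2.ne (ENNReal.rpow_ne_top_of_nonneg hexp (measure_ne_top μ univ))) hL1

variable [NormedSpace ℝ U] [NormedAddCommGroup W] [NormedSpace ℝ W] {k : α → U →L[ℝ] W} {C : ℝ}
  {f : α → U}

lemma MeasureTheory.MemLp.integrable_apply_of_norm_le (hk : AEStronglyMeasurable k μ)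
    (hkC : ∀ᵐ a ∂μ, ‖k a‖ ≤ C) (hp : 1 ≤ p) (hf : MemLp f p μ) :
    Integrable (fun a => k a (f a)) μ :=
  ((hf.integrable hp).norm.const_mul C).mono'
    ((ContinuousLinearMap.id ℝ (U →L[ℝ] W)).aestronglyMeasurable_comp₂ hk hf.1)
    (hkC.mono fun a ha => (k a).le_of_opNorm_le ha (f a))

lemma MeasureTheory.MemLp.norm_integral_apply_le (hkC : ∀ᵐ a ∂μ, ‖k a‖ ≤ C) (hC : 0 ≤ C)
    (hp : 1 ≤ p) (hf : MemLp f p μ) :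
    ‖∫ a, k a (f a) ∂μ‖ ≤ C * (μ univ).toReal ^ (1 - 1 / p.toReal) * (eLpNorm f p μ).toReal :=
  calc ‖∫ a, k a (f a) ∂μ‖ ≤ ∫ a, C * ‖f a‖ ∂μ :=
        norm_integral_le_of_norm_le ((hf.integrable hp).norm.const_mul C)
          (hkC.mono fun a ha => (k a).le_of_opNorm_le ha (f a))
    _ = C * ∫ a, ‖f a‖ ∂μ := integral_const_mul C _
    _ ≤ C * ((μ univ).toReal ^ (1 - 1 / p.toReal) * (eLpNorm f p μ).toReal) :=
        mul_le_mul_of_nonneg_left (hf.integral_norm_le hp) hC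
    _ = _ := (mul_assoc _ _ _).symm

variable [Fact (1 ≤ p)]

noncomputable def kernelIntegralCLM (k : α → U →L[ℝ] W) (hk : AEStronglyMeasurable k μ)
    (hk_bdd : ∃ C, ∀ᵐ a ∂μ, ‖k a‖ ≤ C) : Lp U p μ →L[ℝ] W :=
  LinearMap.mkContinuousOfExistsBound
    { toFun := fun f => ∫ a, k a (f a) ∂μ
      map_add' := fun f g => by
        obtain ⟨C, hkC⟩ := hk_bdd
        have hint := fun f : Lp U p μ =>
          (Lp.memLp f).integrable_apply_of_norm_le hk hkC Fact.out
        rw [← integral_add (hint f) (hint g)]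
        refine integral_congr_ae ((Lp.coeFn_add f g).mono fun a ha => ?_)
        simp only [ha, Pi.add_apply, map_add]
      map_smul' := fun c f => by
        rw [RingHom.id_apply, ← integral_smul]
        refine integral_congr_ae ((Lp.coeFn_smul c f).mono fun a ha => ?_)
        simp only [ha, Pi.smul_apply, map_smul] }
    (by
      obtain ⟨C, hkC⟩ := hk_bdd
      refine ⟨max C 0 * (μ univ).toReal ^ (1 - 1 / p.toReal), fun f => ?_⟩
      rw [Lp.norm_def]
      exact (Lp.memLp f).norm_integral_apply_le
        (hkC.mono fun a ha => ha.trans (le_max_left C 0)) (le_max_right C 0) Fact.out)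

lemma kernelIntegralCLM_toLp (hk : AEStronglyMeasurable k μ)
    (hk_bdd : ∃ C, ∀ᵐ a ∂μ, ‖k a‖ ≤ C) (hf : MemLp f p μ) :
    kernelIntegralCLM k hk hk_bdd (hf.toLp f) = ∫ a, k a (f a) ∂μ :=
  integral_congr_ae (hf.coeFn_toLp.mono fun a ha => by simp only [ha])

end KernelIntegral

lemma MeasureTheory.MemLp.norm_toLp_sq {α E : Type*} [MeasurableSpace α] {μ : Measure α}
    [NormedAddCommGroup E] [InnerProductSpace ℝ E] {f : α → E} (hf : MemLp f 2 μ) :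
    ‖hf.toLp f‖ ^ 2 = ∫ a, ‖f a‖ ^ 2 ∂μ := by
  rw [← real_inner_self_eq_norm_sq, L2.inner_def]
  exact integral_congr_ae (hf.coeFn_toLp.mono fun a ha => by
    simp only [ha, real_inner_self_eq_norm_sq])

lemma ContinuousOn.aestronglyMeasurable_const_sub {E : Type*} [NormedAddCommGroup E]
    {g : ℝ → E} {T : ℝ} (hg : ContinuousOn g (Ioc 0 T)) :
    AEStronglyMeasurable (fun s => g (T - s)) (volume.restrict (Icc 0 T)) := by
  have hcont : ContinuousOn (fun s => g (T - s)) (Ico 0 T) :=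
    hg.comp (continuous_sub_left T).continuousOn fun s hs =>
      ⟨by linarith [hs.2], by linarith [hs.1]⟩
  rw [Measure.restrict_congr_set Ico_ae_eq_Icc.symm]
  exact hcont.aestronglyMeasurable measurableSet_Ico

theorem stmt_10_general {W U : Type*}
    [NormedAddCommGroup W] [NormedSpace ℝ W]
    [NormedAddCommGroup U] [InnerProductSpace ℝ U] [CompleteSpace U]
    (T : ℝ) (hT : 0 < T)
    (G : ℝ → W →L[ℝ] W) (N : ℝ)
    (hGN : ∀ t ∈ Set.Icc (0 : ℝ) T, ‖G t‖ ≤ N)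
    (hGnorm : ContinuousOn G (Set.Ioc 0 T))
    (B : U →L[ℝ] W) (lam : ℝ) (hlam : 0 < lam) (ζ ζ₁ : W) :
    ∃ u₀ : ℝ → U, MemLp u₀ 2 (volume.restrict (Set.Icc 0 T)) ∧
      (∀ u : ℝ → U, MemLp u 2 (volume.restrict (Set.Icc 0 T)) →
        ‖(G T ζ + ∫ s in (0 : ℝ)..T, G (T - s) (B (u₀ s))) - ζ₁‖ ^ 2
            + lam * ∫ t in Set.Icc (0 : ℝ) T, ‖u₀ t‖ ^ 2
          ≤ ‖(G T ζ + ∫ s in (0 : ℝ)..T, G (T - s) (B (u s))) - ζ₁‖ ^ 2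
            + lam * ∫ t in Set.Icc (0 : ℝ) T, ‖u t‖ ^ 2) ∧
      (∀ u : ℝ → U, MemLp u 2 (volume.restrict (Set.Icc 0 T)) →
        ‖(G T ζ + ∫ s in (0 : ℝ)..T, G (T - s) (B (u s))) - ζ₁‖ ^ 2
            + lam * ∫ t in Set.Icc (0 : ℝ) T, ‖u t‖ ^ 2
          = ‖(G T ζ + ∫ s in (0 : ℝ)..T, G (T - s) (B (u₀ s))) - ζ₁‖ ^ 2
            + lam * ∫ t in Set.Icc (0 : ℝ) T, ‖u₀ t‖ ^ 2 →
        u =ᵐ[volume.restrict (Set.Icc (0 : ℝ) T)] u₀) := by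
  set μ := volume.restrict (Icc (0 : ℝ) T)
  have hk : AEStronglyMeasurable (fun s => G (T - s) ∘L B) μ :=
    ContinuousOn.aestronglyMeasurable_const_sub (g := fun t => G t ∘L B)
      (hGnorm.clm_comp continuousOn_const)
  have hk_bdd : ∀ᵐ s ∂μ, ‖G (T - s) ∘L B‖ ≤ N * ‖B‖ := by
    filter_upwards [ae_restrict_mem measurableSet_Icc] with s hs
    exact (G (T - s)).opNorm_comp_le B |>.trans <| mul_le_mul_of_nonneg_right
      (hGN _ ⟨by linarith [hs.2], by linarith [hs.1]⟩) (norm_nonneg B)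
  set K : Lp U 2 μ →L[ℝ] W := kernelIntegralCLM _ hk ⟨_, hk_bdd⟩
  have hcost : ∀ u (hu : MemLp u 2 μ),
      ‖(G T ζ + ∫ s in (0 : ℝ)..T, G (T - s) (B (u s))) - ζ₁‖ ^ 2
          + lam * ∫ t in Icc (0 : ℝ) T, ‖u t‖ ^ 2
        = ‖(G T ζ - ζ₁) + K (hu.toLp u)‖ ^ 2 + lam * ‖hu.toLp u‖ ^ 2 := by
    intro u hu
    rw [kernelIntegralCLM_toLp, hu.norm_toLp_sq, intervalIntegral.integral_of_le hT.le,
      Measure.restrict_congr_set Ioc_ae_eq_Icc, add_sub_right_comm]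
    rfl
  obtain ⟨f₀, hmin, huniq⟩ := existsUnique_isMinOn_norm_add_sq_add_mul_norm_sq K (G T ζ - ζ₁) hlam
  have hcost₀ := hcost f₀ (Lp.memLp f₀)
  rw [Lp.toLp_coeFn] at hcost₀
  refine ⟨f₀, Lp.memLp f₀, fun u hu => ?_, fun u hu heq => ?_⟩
  · rw [hcost₀, hcost u hu]
    exact hmin (mem_univ _)
  · rw [hcost₀, hcost u hu] at heq
    have hu_min : IsMinOn (fun f => ‖(G T ζ - ζ₁) + K f‖ ^ 2 + lam * ‖f‖ ^ 2) univ (hu.toLp u) :=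
      isMinOn_univ_iff.2 fun g => heq.trans_le (hmin (mem_univ g))
    rw [← huniq _ hu_min]
    exact hu.coeFn_toLp.symm

/-- the linear-quadratic regulator problem
`min H(w,u) = ‖w(T) - ζ₁‖² + λ ∫₀ᵀ ‖u(t)‖² dt` over the admissible class of pairs `(w,u)`
(where `w` is the mild solution `w(t) = G(t)ζ + ∫₀ᵗ G(t-s)Bu(s) ds` associated with
`u ∈ L²([0,T];U)`) has a unique optimal pair `(w⁰,u⁰)`: the control `u⁰` is unique up to
a.e. equality, which determines `w⁰` uniquely. -/
theorem stmt_10 {W U : Type*}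
    [NormedAddCommGroup W] [NormedSpace ℝ W] [CompleteSpace W]
    [NormedAddCommGroup U] [InnerProductSpace ℝ U] [CompleteSpace U]
    [TopologicalSpace.SeparableSpace U]
    (T : ℝ) (hT : 0 < T)
    (G : ℝ → W →L[ℝ] W) (N : ℝ)
    (hGsc : ∀ w : W, ContinuousOn (fun t : ℝ => G t w) (Set.Icc 0 T))
    (hG0 : G 0 = 1)
    (hGN : ∀ t ∈ Set.Icc (0 : ℝ) T, ‖G t‖ ≤ N)
    (hGcpt : ∀ t ∈ Set.Ioc (0 : ℝ) T, IsCompactOperator (⇑(G t)))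
    (hGnorm : ContinuousOn G (Set.Ioc 0 T))
    (B : U →L[ℝ] W) (lam : ℝ) (hlam : 0 < lam) (ζ ζ₁ : W) :
    ∃ u₀ : ℝ → U, MemLp u₀ 2 (volume.restrict (Set.Icc 0 T)) ∧
      (∀ u : ℝ → U, MemLp u 2 (volume.restrict (Set.Icc 0 T)) →
        ‖(G T ζ + ∫ s in (0 : ℝ)..T, G (T - s) (B (u₀ s))) - ζ₁‖ ^ 2
            + lam * ∫ t in Set.Icc (0 : ℝ) T, ‖u₀ t‖ ^ 2
          ≤ ‖(G T ζ + ∫ s in (0 : ℝ)..T, G (T - s) (B (u s))) - ζ₁‖ ^ 2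
            + lam * ∫ t in Set.Icc (0 : ℝ) T, ‖u t‖ ^ 2) ∧
      (∀ u : ℝ → U, MemLp u 2 (volume.restrict (Set.Icc 0 T)) →
        ‖(G T ζ + ∫ s in (0 : ℝ)..T, G (T - s) (B (u s))) - ζ₁‖ ^ 2
            + lam * ∫ t in Set.Icc (0 : ℝ) T, ‖u t‖ ^ 2
          = ‖(G T ζ + ∫ s in (0 : ℝ)..T, G (T - s) (B (u₀ s))) - ζ₁‖ ^ 2
            + lam * ∫ t in Set.Icc (0 : ℝ) T, ‖u₀ t‖ ^ 2 →
        u =ᵐ[volume.restrict (Set.Icc (0 : ℝ) T)] u₀) :=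
  stmt_10_general T hT G N hGN hGnorm B lam hlam ζ ζ₁
end

section
/- Let W be a Banach space, T > 0, and let G : [0,T] → L(W) be strongly continuous with G(0) = I, G(t) compact for every t ∈ (0,T], and t ↦ G(t) operator-norm continuous on (0,T]. Then the operator I : L²([0,T];W) → C([0,T];W) defined by (I g)(t) = ∫₀ᵗ G(t−s) g(s) ds is a compact operator. -/
open MeasureTheory Set Filter Topology

/-!
By Arzelà–Ascoli it suffices to show that the functions `t ↦ ∫₀ᵗ G(t - s) g(s) ds` with
`‖g‖_{L²} ≤ R` are uniformly equicontinuous and pointwise totally bounded. Both properties survive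
uniform approximation, and replacing the kernel `G u` by `G (max u δ)` moves every such function by
at most `2 M R √δ` in sup norm (Cauchy–Schwarz on an interval of length `δ`, with `M` a
Banach–Steinhaus bound for `‖G u‖`). The truncated kernel is norm-continuous on all of `[0, T]`,
which gives equicontinuity, and compact-valued, so Riemann sums `∑ G(t - pᵢ) ∫_{pᵢ}^{pᵢ₊₁} g`
approximate its integrals, uniformly in `g`, by points of one compact set.
-/

theorem totallyBounded_of_forall_exists_totallyBounded_dist_le {α : Type*}
    [PseudoMetricSpace α] {s : Set α}
    (h : ∀ ε > 0, ∃ t, TotallyBounded t ∧ ∀ x ∈ s, ∃ y ∈ t, dist x y ≤ ε) :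
    TotallyBounded s := by
  rw [Metric.totallyBounded_iff]
  intro ε hε
  obtain ⟨t, ht, hst⟩ := h (ε / 2) (half_pos hε)
  obtain ⟨c, hc, htc⟩ := Metric.totallyBounded_iff.mp ht (ε / 2) (half_pos hε)
  refine ⟨c, hc, fun x hx => ?_⟩
  obtain ⟨y, hy, hxy⟩ := hst x hx
  obtain ⟨z, hz, hyz⟩ := mem_iUnion₂.mp (htc hy)
  refine mem_iUnion₂.mpr ⟨z, hz, ?_⟩
  rw [Metric.mem_ball] at hyz ⊢
  linarith [dist_triangle x y z]

theorem uniformEquicontinuous_of_forall_exists_dist_le {ι α β : Type*} [PseudoMetricSpace α]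
    [PseudoMetricSpace β] {F : ι → β → α}
    (h : ∀ ε > 0, ∃ F' : ι → β → α,
      UniformEquicontinuous F' ∧ ∀ i x, dist (F i x) (F' i x) ≤ ε) :
    UniformEquicontinuous F := by
  rw [Metric.uniformEquicontinuous_iff]
  intro ε hε
  obtain ⟨F', hF', hFF'⟩ := h (ε / 4) (by positivity)
  obtain ⟨δ, hδ, hF'δ⟩ := Metric.uniformEquicontinuous_iff.mp hF' (ε / 2) (half_pos hε)
  refine ⟨δ, hδ, fun x y hxy i => ?_⟩
  have := dist_triangle4 (F i x) (F' i x) (F' i y) (F i y)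
  linarith [hFF' i x, hF'δ x y hxy i, dist_comm (F' i y) (F i y) ▸ hFF' i y]

theorem ContinuousMap.isCompact_closure_of_equicontinuous {X α ι : Type*}
    [TopologicalSpace X] [CompactlyCoherentSpace X] [UniformSpace α] [CompleteSpace α] [T2Space α]
    {f : ι → X → α} (hf : Equicontinuous f) (hf_bdd : ∀ x, TotallyBounded (range fun i => f i x))
    {S : Set C(X, α)} (hS : ∀ F ∈ S, ∃ i, ⇑F = f i) : IsCompact (closure S) := by
  choose i hi using hS
  have h_clemb : Topology.IsClosedEmbedding
      (UniformOnFun.ofFun {K : Set X | IsCompact K} ∘ ((⇑) : C(X, α) → X → α)) := by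
    refine ⟨ContinuousMap.isUniformEmbedding_toUniformOnFunIsCompact.isEmbedding, ?_⟩
    change IsClosed (range ContinuousMap.toUniformOnFunIsCompact)
    rw [ContinuousMap.range_toUniformOnFunIsCompact]
    exact UniformOnFun.isClosed_setOfPred_continuous CompactlyCoherentSpace.isCoherentWith
  have h_eqcont : Equicontinuous ((⇑) ∘ ((↑) : S → C(X, α))) := by
    have : (⇑) ∘ ((↑) : S → C(X, α)) = f ∘ fun F : S => i F.1 F.2 :=
      funext fun F => hi F.1 F.2
    exact this ▸ hf.comp _
  refine ArzelaAscoli.isCompact_closure_of_isClosedEmbedding (fun K hK => hK) h_clemb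
    (fun K _ => h_eqcont.equicontinuousOn K) fun _ _ x _ => ?_
  exact ⟨_, (hf_bdd x).closure.isCompact_of_isClosed isClosed_closure,
    fun F hF => subset_closure ⟨i F hF, congrFun (hi F hF) x ▸ rfl⟩⟩

theorem exists_pos_forall_mul_sqrt_lt (C : ℝ) {ε : ℝ} (hε : 0 < ε) :
    ∃ η > 0, ∀ x, |x| < η → C * √x < ε := by
  have : Tendsto (fun x => C * √x) (𝓝 0) (𝓝 0) := by
    simpa using (by fun_prop : Continuous fun x : ℝ => C * √x).tendsto 0
  simpa [Real.dist_eq] using Metric.eventually_nhds_iff.mp (this.eventually (gt_mem_nhds hε))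

theorem exists_mem_Ioc_mul_sqrt_lt {T : ℝ} (hT : 0 < T) (C : ℝ) {ε : ℝ} (hε : 0 < ε) :
    ∃ δ ∈ Ioc 0 T, C * √δ < ε := by
  obtain ⟨η, hη, h⟩ := exists_pos_forall_mul_sqrt_lt C hε
  have hδ : 0 < min (η / 2) T := lt_min (half_pos hη) hT
  refine ⟨min (η / 2) T, ⟨hδ, min_le_right _ _⟩, h _ ?_⟩
  rw [abs_of_pos hδ]
  exact (min_le_left _ _).trans_lt (half_lt_self hη)

def l2Ball (E : Type*) [NormedAddCommGroup E] (T R : ℝ) : Set (ℝ → E) :=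
  {g | MemLp g 2 (volume.restrict (Icc 0 T)) ∧
    (eLpNorm g 2 (volume.restrict (Icc 0 T))).toReal ≤ R}

section

variable {E F : Type*} [NormedAddCommGroup E] [NormedAddCommGroup F]

section l2Ball

variable {T R a b : ℝ} {g : ℝ → E}

theorem nonneg_of_mem_l2Ball (hg : g ∈ l2Ball E T R) : 0 ≤ R :=
  ENNReal.toReal_nonneg.trans hg.2

theorem intervalIntegrable_of_mem_l2Ball (hg : g ∈ l2Ball E T R) (ha : a ∈ Icc 0 T)
    (hb : b ∈ Icc 0 T) : IntervalIntegrable g volume a b := by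
  have : IsFiniteMeasure (volume.restrict (Icc (0 : ℝ) T)) := by
    rw [isFiniteMeasure_restrict]; exact measure_Icc_lt_top.ne
  exact (IntegrableOn.mono_set (hg.1.integrable one_le_two)
    (uIcc_subset_Icc ha hb)).intervalIntegrable

theorem integral_norm_le_of_mem_l2Ball (hg : g ∈ l2Ball E T R) (ha : 0 ≤ a) (hab : a ≤ b)
    (hb : b ≤ T) : ∫ s in a..b, ‖g s‖ ≤ R * √(b - a) := by
  have hν : volume.restrict (Ioc a b) ≤ volume.restrict (Icc 0 T) :=
    Measure.restrict_mono (Ioc_subset_Icc_self.trans (Icc_subset_Icc ha hb)) le_rfl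
  have hg2 : MemLp g 2 (volume.restrict (Ioc a b)) := hg.1.mono_measure hν
  have hHolder : eLpNorm g 1 (volume.restrict (Ioc a b)) ≤
      eLpNorm g 2 (volume.restrict (Icc 0 T)) * ENNReal.ofReal (b - a) ^ (1 / 2 : ℝ) := by
    have := eLpNorm_le_eLpNorm_mul_rpow_measure_univ (p := 1) (q := 2) one_le_two hg2.1
    rw [Measure.restrict_apply_univ, Real.volume_Ioc] at this
    norm_num at this
    exact this.trans (mul_le_mul_left (eLpNorm_mono_measure g hν) _)
  have hfin :
      eLpNorm g 2 (volume.restrict (Icc 0 T)) * ENNReal.ofReal (b - a) ^ (1 / 2 : ℝ) ≠ ⊤ :=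
    ENNReal.mul_ne_top hg.1.2.ne
      (ENNReal.rpow_ne_top_of_nonneg (by norm_num) ENNReal.ofReal_ne_top)
  rw [intervalIntegral.integral_of_le hab, integral_norm_eq_lintegral_enorm hg2.1,
    ← eLpNorm_one_eq_lintegral_enorm]
  calc (eLpNorm g 1 (volume.restrict (Ioc a b))).toReal
      ≤ (eLpNorm g 2 (volume.restrict (Icc 0 T))).toReal * √(b - a) := by
        refine (ENNReal.toReal_mono hfin hHolder).trans_eq ?_
        rw [ENNReal.toReal_mul, ← ENNReal.toReal_rpow, ENNReal.toReal_ofReal (by linarith),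
          Real.sqrt_eq_rpow]
    _ ≤ R * √(b - a) := by gcongr; exact hg.2

end l2Ball

variable [NormedSpace ℝ E] [NormedSpace ℝ F]

theorem exists_norm_le_of_continuousOn_apply {X : Type*} [TopologicalSpace X] [CompleteSpace E]
    {s : Set X} (hs : IsCompact s) {G : X → E →L[ℝ] F}
    (hG : ∀ w, ContinuousOn (fun t => G t w) s) : ∃ M, ∀ u ∈ s, ‖G u‖ ≤ M := by
  obtain ⟨M, hM⟩ := banach_steinhaus (g := fun u : s => G u) fun w =>
    (hs.exists_bound_of_continuousOn (hG w)).imp fun C hC u => hC u u.2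
  exact ⟨M, fun u hu => hM ⟨u, hu⟩⟩

theorem norm_integral_clm_apply_le {A : ℝ → E →L[ℝ] F} {g : ℝ → E} {a b C : ℝ}
    (hab : a ≤ b) (hg : IntervalIntegrable g volume a b) (hA : ∀ s ∈ Ioc a b, ‖A s‖ ≤ C) :
    ‖∫ s in a..b, A s (g s)‖ ≤ C * ∫ s in a..b, ‖g s‖ := by
  rw [← intervalIntegral.integral_const_mul]
  exact intervalIntegral.norm_integral_le_of_norm_le hab
    (ae_of_all _ fun s hs => (A s).le_of_opNorm_le (hA s hs) _) (hg.norm.const_mul C)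

theorem intervalIntegrable_clm_apply {A : ℝ → E →L[ℝ] F} {g : ℝ → E} {a b C : ℝ}
    (hab : a ≤ b) (hA : ContinuousOn A (Ioo a b)) (hAC : ∀ s ∈ Ioo a b, ‖A s‖ ≤ C)
    (hg : IntervalIntegrable g volume a b) :
    IntervalIntegrable (fun s => A s (g s)) volume a b := by
  rw [intervalIntegrable_iff_integrableOn_Ioo_of_le hab] at hg ⊢
  refine Integrable.mono' (hg.norm.const_mul C)
    ((isBoundedBilinearMap_apply.continuous.comp_aestronglyMeasurable₂
      (hA.aestronglyMeasurable measurableSet_Ioo) hg.1)) ?_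
  filter_upwards [ae_restrict_mem measurableSet_Ioo] with s hs
  exact (A s).le_of_opNorm_le (hAC s hs) _

theorem norm_integral_clm_apply_sub_le [CompleteSpace E] [CompleteSpace F]
    {A : ℝ → E →L[ℝ] F} {g : ℝ → E} {u v c ε : ℝ} (huv : u ≤ v)
    (hAg : IntervalIntegrable (fun s => A s (g s)) volume u v)
    (hg : IntervalIntegrable g volume u v) (hA : ∀ s ∈ Ioc u v, ‖A s - A c‖ ≤ ε) :
    ‖(∫ s in u..v, A s (g s)) - A c (∫ s in u..v, g s)‖ ≤ ε * ∫ s in u..v, ‖g s‖ := by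
  have hAcg : IntervalIntegrable (fun s => A c (g s)) volume u v :=
    ⟨(A c).integrable_comp hg.1, (A c).integrable_comp hg.2⟩
  rw [← (A c).intervalIntegral_comp_comm hg, ← intervalIntegral.integral_sub hAg hAcg]
  simpa using norm_integral_clm_apply_le huv hg hA

theorem sum_integral_adjacent_intervals_of_monotone {X : Type*} [NormedAddCommGroup X]
    [NormedSpace ℝ X] {f : ℝ → X} {p : ℕ → ℝ} {n : ℕ} (hp : Monotone p)
    (hf : IntervalIntegrable f volume (p 0) (p n)) :
    ∑ i ∈ Finset.range n, ∫ s in p i..p (i + 1), f s = ∫ s in p 0..p n, f s :=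
  intervalIntegral.sum_integral_adjacent_intervals fun i hi =>
    hf.mono_set (uIcc_subset_uIcc (mem_uIcc_of_le (hp i.zero_le) (hp hi.le))
      (mem_uIcc_of_le (hp (i + 1).zero_le) (hp hi)))

theorem exists_partition_norm_integral_sub_sum_le [CompleteSpace E] [CompleteSpace F]
    {A : ℝ → E →L[ℝ] F} {a b : ℝ} (hab : a ≤ b) (hA : ContinuousOn A (Icc a b)) {ε : ℝ}
    (hε : 0 < ε) :
    ∃ (n : ℕ) (p : ℕ → ℝ), Monotone p ∧ (∀ i ≤ n, p i ∈ Icc a b) ∧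
      ∀ g : ℝ → E, IntervalIntegrable g volume a b →
        ‖(∫ s in a..b, A s (g s)) -
            ∑ i ∈ Finset.range n, A (p i) (∫ s in p i..p (i + 1), g s)‖ ≤
          ε * ∫ s in a..b, ‖g s‖ := by
  obtain ⟨η, hη, hAη⟩ := Metric.uniformContinuousOn_iff_le.mp
    (isCompact_Icc.uniformContinuousOn_of_continuous hA) ε hε
  obtain ⟨M, hM⟩ := isCompact_Icc.exists_bound_of_continuousOn hA
  obtain ⟨n, hn⟩ := exists_nat_gt ((b - a) / η)
  have hn0 : (0 : ℝ) < n := (div_nonneg (sub_nonneg.2 hab) hη.le).trans_lt hn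
  set d := (b - a) / n with d_def
  have hd0 : 0 ≤ d := div_nonneg (sub_nonneg.2 hab) hn0.le
  have hdη : d ≤ η := by
    rw [d_def, div_le_iff₀ hn0]; rw [div_lt_iff₀ hη] at hn; linarith
  set p : ℕ → ℝ := fun i => a + i * d with p_def
  have hp : Monotone p := fun i j hij => by simp only [p_def]; gcongr
  have hp0 : p 0 = a := by simp [p_def]
  have hpn : p n = b := by simp only [p_def, d_def]; field_simp; ring
  have hp_mem : ∀ i ≤ n, p i ∈ Icc a b := fun i hi => ⟨hp0 ▸ hp i.zero_le, hpn ▸ hp hi⟩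
  refine ⟨n, p, hp, hp_mem, fun g hg => ?_⟩
  have hAg : IntervalIntegrable (fun s => A s (g s)) volume a b :=
    intervalIntegrable_clm_apply hab (hA.mono Ioo_subset_Icc_self)
      (fun s hs => hM s (Ioo_subset_Icc_self hs)) hg
  rw [← hp0, ← hpn] at hAg hg ⊢
  rw [← sum_integral_adjacent_intervals_of_monotone hp hAg,
    ← sum_integral_adjacent_intervals_of_monotone hp hg.norm, Finset.mul_sum,
    ← Finset.sum_sub_distrib]
  refine (norm_sum_le _ _).trans (Finset.sum_le_sum fun i hi => ?_)
  have hi : i + 1 ≤ n := Finset.mem_range.mp hi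
  have hsub : uIcc (p i) (p (i + 1)) ⊆ uIcc (p 0) (p n) :=
    uIcc_subset_uIcc (mem_uIcc_of_le (hp i.zero_le) (hp (by omega)))
      (mem_uIcc_of_le (hp (i + 1).zero_le) (hp hi))
  refine norm_integral_clm_apply_sub_le (hp i.le_succ) (hAg.mono_set hsub) (hg.mono_set hsub)
    fun s hs => ?_
  have hs_mem : s ∈ Icc a b :=
    ⟨(hp_mem i (by omega)).1.trans hs.1.le, hs.2.trans (hp_mem _ hi).2⟩
  rw [← dist_eq_norm]
  refine hAη s hs_mem (p i) (hp_mem i (by omega)) ?_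
  rw [Real.dist_eq, abs_of_nonneg (by linarith [hs.1])]
  have : p (i + 1) - p i = d := by simp only [p_def]; push_cast; ring
  linarith [hs.2]

noncomputable def volterra (K : ℝ → E →L[ℝ] F) (g : ℝ → E) (t : ℝ) : F :=
  ∫ s in (0 : ℝ)..t, K (t - s) (g s)

section volterra

variable {K : ℝ → E →L[ℝ] F} {T M R : ℝ} {g : ℝ → E}

theorem intervalIntegrable_volterra_integrand (hK : ContinuousOn K (Ioc 0 T))
    (hM : ∀ u ∈ Icc 0 T, ‖K u‖ ≤ M) (hg : g ∈ l2Ball E T R) {t a b : ℝ} (ha : 0 ≤ a)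
    (hab : a ≤ b) (hbt : b ≤ t) (htT : t ≤ T) :
    IntervalIntegrable (fun s => K (t - s) (g s)) volume a b :=
  intervalIntegrable_clm_apply hab
    (hK.comp (continuous_sub_left t).continuousOn fun s hs =>
      ⟨by linarith [hs.2], by linarith [hs.1]⟩)
    (fun s hs => hM _ ⟨by linarith [hs.2], by linarith [hs.1]⟩)
    (intervalIntegrable_of_mem_l2Ball hg ⟨ha, by linarith⟩ ⟨by linarith, by linarith⟩)

theorem norm_volterra_sub_volterra_le (hK : ContinuousOn K (Ioc 0 T))
    (hM : ∀ u ∈ Icc 0 T, ‖K u‖ ≤ M) (hg : g ∈ l2Ball E T R) {t t' ε : ℝ} (ht : 0 ≤ t)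
    (htt' : t ≤ t') (ht'T : t' ≤ T) (hε : 0 ≤ ε)
    (hKε : ∀ s ∈ Ioc 0 t, ‖K (t' - s) - K (t - s)‖ ≤ ε) :
    ‖volterra K g t' - volterra K g t‖ ≤ M * (R * √(t' - t)) + ε * (R * √t) := by
  have hM0 : 0 ≤ M := (norm_nonneg _).trans (hM 0 ⟨le_rfl, ht.trans (htt'.trans ht'T)⟩)
  have hi {τ a b : ℝ} (ha : 0 ≤ a) (hab : a ≤ b) (hbτ : b ≤ τ) (hτ : τ ≤ T) :=
    intervalIntegrable_volterra_integrand hK hM hg ha hab hbτ hτ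
  have hsplit : volterra K g t' - volterra K g t =
      (∫ s in t..t', K (t' - s) (g s)) + ∫ s in (0 : ℝ)..t, (K (t' - s) - K (t - s)) (g s) := by
    rw [volterra, volterra, ← intervalIntegral.integral_add_adjacent_intervals
      (hi le_rfl ht htt' ht'T) (hi ht htt' le_rfl ht'T)]
    simp only [sub_apply]
    rw [intervalIntegral.integral_sub (hi le_rfl ht htt' ht'T)
      (hi le_rfl ht le_rfl (htt'.trans ht'T))]
    abel
  rw [hsplit]
  refine (norm_add_le _ _).trans (add_le_add ?_ ?_)
  · calc _ ≤ M * ∫ s in t..t', ‖g s‖ :=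
          norm_integral_clm_apply_le htt'
            (intervalIntegrable_of_mem_l2Ball hg ⟨ht, htt'.trans ht'T⟩ ⟨ht.trans htt', ht'T⟩)
            fun s hs => hM _ ⟨by linarith [hs.2], by linarith [hs.1]⟩
      _ ≤ M * (R * √(t' - t)) := by
          gcongr; exact integral_norm_le_of_mem_l2Ball hg ht htt' ht'T
  · calc _ ≤ ε * ∫ s in (0 : ℝ)..t, ‖g s‖ :=
          norm_integral_clm_apply_le ht
            (intervalIntegrable_of_mem_l2Ball hg ⟨le_rfl, ht.trans (htt'.trans ht'T)⟩
              ⟨ht, htt'.trans ht'T⟩) hKε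
      _ ≤ ε * (R * √t) := by
          gcongr; simpa using integral_norm_le_of_mem_l2Ball hg le_rfl ht (htt'.trans ht'T)

theorem uniformEquicontinuous_volterra_of_continuousOn (hK : ContinuousOn K (Icc 0 T)) :
    UniformEquicontinuous fun (g : l2Ball E T R) (t : Icc 0 T) => volterra K g t := by
  rw [Metric.uniformEquicontinuous_iff]
  intro ε hε
  obtain ⟨M, hM⟩ := isCompact_Icc.exists_bound_of_continuousOn hK
  obtain ⟨ε', hε', hε'ε⟩ := exists_pos_mul_lt (half_pos hε) (R * √T)
  obtain ⟨η₁, hη₁, hKη⟩ := Metric.uniformContinuousOn_iff_le.mp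
    (isCompact_Icc.uniformContinuousOn_of_continuous hK) ε' hε'
  obtain ⟨η₂, hη₂, hMη⟩ := exists_pos_forall_mul_sqrt_lt (M * R) (half_pos hε)
  suffices h : ∀ t t' : Icc 0 T, t ≤ t' → dist t t' < min η₁ η₂ → ∀ g : l2Ball E T R,
      ‖volterra K g t' - volterra K g t‖ < ε by
    refine ⟨min η₁ η₂, lt_min hη₁ hη₂, fun t t' htt' g => ?_⟩
    rcases le_total t t' with h' | h'
    · rw [dist_eq_norm, norm_sub_rev]; exact h t t' h' htt' g
    · rw [dist_eq_norm]; exact h t' t h' (dist_comm t t' ▸ htt') g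
  rintro ⟨t, ht⟩ ⟨t', ht'⟩ (htt' : t ≤ t') hdist ⟨g, hg⟩
  rw [Subtype.dist_eq, Real.dist_eq, abs_sub_comm, abs_of_nonneg (sub_nonneg.2 htt'),
    lt_min_iff] at hdist
  have hR : 0 ≤ R := nonneg_of_mem_l2Ball hg
  have hKε : ∀ s ∈ Ioc 0 t, ‖K (t' - s) - K (t - s)‖ ≤ ε' := fun s hs => by
    rw [← dist_eq_norm]
    refine hKη _ ⟨by linarith [hs.2], by linarith [hs.1, ht'.2]⟩ _
      ⟨by linarith [hs.2], by linarith [hs.1, ht.2]⟩ ?_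
    rw [Real.dist_eq, abs_of_nonneg (by linarith)]
    linarith
  calc ‖volterra K g t' - volterra K g t‖ ≤ M * (R * √(t' - t)) + ε' * (R * √t) :=
        norm_volterra_sub_volterra_le (hK.mono Ioc_subset_Icc_self) hM hg ht.1 htt' ht'.2 hε'.le
          hKε
    _ < ε / 2 + ε / 2 := by
        gcongr ?_ + ?_
        · rw [← mul_assoc]; exact hMη _ (by rw [abs_of_nonneg (by linarith)]; exact hdist.2)
        · calc ε' * (R * √t) ≤ ε' * (R * √T) := by gcongr; exact ht.2
            _ < ε / 2 := by linarith
    _ = ε := add_halves ε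

theorem totallyBounded_image_volterra_of_continuousOn [CompleteSpace E] [CompleteSpace F]
    (hK : ContinuousOn K (Icc 0 T)) (hKc : ∀ u ∈ Icc 0 T, IsCompactOperator (K u)) {t : ℝ}
    (ht : t ∈ Icc 0 T) : TotallyBounded ((fun g => volterra K g t) '' l2Ball E T R) := by
  refine totallyBounded_of_forall_exists_totallyBounded_dist_le fun ε hε => ?_
  obtain ⟨ε', hε', hε'ε⟩ := exists_pos_mul_lt hε (R * √T)
  have hA : ContinuousOn (fun s => K (t - s)) (Icc 0 t) :=
    hK.comp (continuous_sub_left t).continuousOn fun s hs =>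
      ⟨by linarith [hs.2], by linarith [hs.1, ht.2]⟩
  obtain ⟨n, p, hp, hp_mem, hp_approx⟩ := exists_partition_norm_integral_sub_sum_le ht.1 hA hε'
  have hp_arg : ∀ i ≤ n, t - p i ∈ Icc 0 T := fun i hi =>
    ⟨by linarith [(hp_mem i hi).2], by linarith [(hp_mem i hi).1, ht.2]⟩
  -- each Riemann-sum term lies in the relatively compact image of a ball under `K (t - p i)`
  let Q : Set F := (fun v : Fin n → F => ∑ i, v i) ''
    univ.pi fun i : Fin n => closure (K (t - p i) '' Metric.closedBall 0 (R * √T))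
  have hQ : IsCompact Q :=
    (isCompact_univ_pi fun i : Fin n =>
      (hKc _ (hp_arg i i.2.le)).isCompact_closure_image_of_isVonNBounded
        (NormedSpace.isVonNBounded_closedBall ℝ E _)).image
      (continuous_finsetSum _ fun i _ => continuous_apply i)
  refine ⟨Q, hQ.totallyBounded, ?_⟩
  rintro _ ⟨g, hg, rfl⟩
  have hR : 0 ≤ R := nonneg_of_mem_l2Ball hg
  have hpiece : ∀ i < n, ‖∫ s in p i..p (i + 1), g s‖ ≤ R * √T := fun i hi => by
    have hle := hp i.le_succ
    calc ‖∫ s in p i..p (i + 1), g s‖ ≤ ∫ s in p i..p (i + 1), ‖g s‖ :=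
          intervalIntegral.norm_integral_le_integral_norm hle
      _ ≤ R * √(p (i + 1) - p i) :=
          integral_norm_le_of_mem_l2Ball hg (hp_mem i hi.le).1 hle ((hp_mem _ hi).2.trans ht.2)
      _ ≤ R * √T := by
          gcongr; linarith [(hp_mem i hi.le).1, (hp_mem _ hi).2, ht.2]
  refine ⟨∑ i : Fin n, K (t - p i) (∫ s in p i..p (i + 1), g s),
    ⟨_, fun i _ => subset_closure ⟨_, mem_closedBall_zero_iff.mpr (hpiece i i.2), rfl⟩, rfl⟩, ?_⟩
  rw [dist_eq_norm,
    Fin.sum_univ_eq_sum_range (fun i => K (t - p i) (∫ s in p i..p (i + 1), g s))]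
  calc _ ≤ ε' * ∫ s in (0 : ℝ)..t, ‖g s‖ :=
        hp_approx g (intervalIntegrable_of_mem_l2Ball hg ⟨le_rfl, ht.1.trans ht.2⟩ ht)
    _ ≤ ε' * (R * √T) := by
        gcongr
        calc ∫ s in (0 : ℝ)..t, ‖g s‖ ≤ R * √(t - 0) :=
              integral_norm_le_of_mem_l2Ball hg le_rfl ht.1 ht.2
          _ ≤ R * √T := by gcongr; linarith [ht.2]
    _ ≤ ε := by linarith

theorem max_mem_Ioc {T u δ : ℝ} (hu : u ∈ Icc 0 T) (hδ : δ ∈ Ioc 0 T) : max u δ ∈ Ioc 0 T :=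
  ⟨hδ.1.trans_le (le_max_right _ _), max_le hu.2 hδ.2⟩

theorem continuousOn_comp_max (hK : ContinuousOn K (Ioc 0 T)) {δ : ℝ} (hδ : δ ∈ Ioc 0 T) :
    ContinuousOn (fun u => K (max u δ)) (Icc 0 T) :=
  hK.comp (continuous_id.max continuous_const).continuousOn fun _ hu => max_mem_Ioc hu hδ

theorem norm_volterra_sub_volterra_comp_max_le (hK : ContinuousOn K (Ioc 0 T))
    (hM : ∀ u ∈ Icc 0 T, ‖K u‖ ≤ M) (hg : g ∈ l2Ball E T R) {δ t : ℝ} (hδ : δ ∈ Ioc 0 T)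
    (ht : t ∈ Icc 0 T) :
    ‖volterra K g t - volterra (fun u => K (max u δ)) g t‖ ≤ 2 * M * R * √δ := by
  have hM0 : 0 ≤ M := (norm_nonneg _).trans (hM 0 ⟨le_rfl, hδ.1.le.trans hδ.2⟩)
  have hR : 0 ≤ R := nonneg_of_mem_l2Ball hg
  have hMδ : ∀ u ∈ Icc 0 T, ‖K (max u δ)‖ ≤ M := fun u hu =>
    hM _ (Ioc_subset_Icc_self (max_mem_Ioc hu hδ))
  set τ := max 0 (t - δ)
  have hτ0 : 0 ≤ τ := le_max_left _ _
  have hτt : τ ≤ t := max_le ht.1 (by linarith [hδ.1])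
  -- the two kernels agree where `t - s ≥ δ`, i.e. on `(0, τ]`
  have hzero : ∀ s ∈ Ioc 0 t \ Ioc τ t, K (t - s) (g s) - K (max (t - s) δ) (g s) = 0 := by
    rintro s ⟨hs, hsτ⟩
    have hsτ : s ≤ τ := by by_contra h; exact hsτ ⟨not_le.mp h, hs.2⟩
    have : τ = t - δ :=
      max_eq_right (by by_contra h; linarith [max_eq_left (not_le.mp h).le, hs.1])
    rw [max_eq_left (by linarith), sub_self]
  rw [volterra, volterra, ← intervalIntegral.integral_sub
      (intervalIntegrable_volterra_integrand hK hM hg le_rfl ht.1 le_rfl ht.2)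
      (intervalIntegrable_volterra_integrand
        ((continuousOn_comp_max hK hδ).mono Ioc_subset_Icc_self) hMδ hg le_rfl ht.1 le_rfl ht.2),
    intervalIntegral.integral_of_le ht.1, setIntegral_eq_of_subset_of_forall_sdiff_eq_zero
      measurableSet_Ioc (Ioc_subset_Ioc_left hτ0) hzero, ← intervalIntegral.integral_of_le hτt]
  have hbound := norm_integral_clm_apply_le (A := fun s => K (t - s) - K (max (t - s) δ)) hτt
    (intervalIntegrable_of_mem_l2Ball hg ⟨hτ0, hτt.trans ht.2⟩ ht) fun s hs =>
      (norm_sub_le _ _).trans (two_mul M ▸ add_le_add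
        (hM _ ⟨by linarith [hs.2], by linarith [hs.1, ht.2]⟩)
        (hMδ _ ⟨by linarith [hs.2], by linarith [hs.1, ht.2]⟩))
  simp only [sub_apply] at hbound
  refine hbound.trans ?_
  calc 2 * M * ∫ s in τ..t, ‖g s‖ ≤ 2 * M * (R * √(t - τ)) := by
        gcongr; exact integral_norm_le_of_mem_l2Ball hg hτ0 hτt ht.2
    _ ≤ 2 * M * R * √δ := by
        rw [← mul_assoc]; gcongr; linarith [le_max_right 0 (t - δ)]

theorem uniformEquicontinuous_volterra (hT : 0 < T) (hK : ContinuousOn K (Ioc 0 T))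
    (hM : ∀ u ∈ Icc 0 T, ‖K u‖ ≤ M) :
    UniformEquicontinuous fun (g : l2Ball E T R) (t : Icc 0 T) => volterra K g t := by
  refine uniformEquicontinuous_of_forall_exists_dist_le fun ε hε => ?_
  obtain ⟨δ, hδ, hδε⟩ := exists_mem_Ioc_mul_sqrt_lt hT (2 * M * R) hε
  refine ⟨_, uniformEquicontinuous_volterra_of_continuousOn (continuousOn_comp_max hK hδ),
    fun g t => ?_⟩
  rw [dist_eq_norm]
  exact (norm_volterra_sub_volterra_comp_max_le hK hM g.2 hδ t.2).trans hδε.le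

theorem totallyBounded_image_volterra [CompleteSpace E] [CompleteSpace F] (hT : 0 < T)
    (hK : ContinuousOn K (Ioc 0 T)) (hM : ∀ u ∈ Icc 0 T, ‖K u‖ ≤ M)
    (hKc : ∀ u ∈ Ioc 0 T, IsCompactOperator (K u)) {t : ℝ} (ht : t ∈ Icc 0 T) :
    TotallyBounded ((fun g => volterra K g t) '' l2Ball E T R) := by
  refine totallyBounded_of_forall_exists_totallyBounded_dist_le fun ε hε => ?_
  obtain ⟨δ, hδ, hδε⟩ := exists_mem_Ioc_mul_sqrt_lt hT (2 * M * R) hε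
  refine ⟨_, totallyBounded_image_volterra_of_continuousOn (R := R)
    (continuousOn_comp_max hK hδ) (fun u hu => hKc _ (max_mem_Ioc hu hδ)) ht, ?_⟩
  rintro _ ⟨g, hg, rfl⟩
  refine ⟨_, ⟨g, hg, rfl⟩, ?_⟩
  rw [dist_eq_norm]
  exact (norm_volterra_sub_volterra_comp_max_le hK hM hg hδ ht).trans hδε.le

end volterra

end

theorem stmt_16_general {W : Type*}
    [NormedAddCommGroup W] [NormedSpace ℝ W] [CompleteSpace W]
    (T : ℝ) (hT : 0 < T)
    (G : ℝ → W →L[ℝ] W)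
    (hGsc : ∀ w : W, ContinuousOn (fun t : ℝ => G t w) (Set.Icc 0 T))
    (hGcpt : ∀ t ∈ Set.Ioc (0 : ℝ) T, IsCompactOperator (⇑(G t)))
    (hGnorm : ContinuousOn G (Set.Ioc 0 T)) :
    ∀ R : ℝ, IsCompact (closure {F : C(Set.Icc (0 : ℝ) T, W) |
      ∃ g : ℝ → W, MemLp g 2 (volume.restrict (Set.Icc 0 T)) ∧
        (eLpNorm g 2 (volume.restrict (Set.Icc (0 : ℝ) T))).toReal ≤ R ∧
        ∀ t : Set.Icc (0 : ℝ) T,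
          F t = ∫ s in (0 : ℝ)..(t : ℝ), G ((t : ℝ) - s) (g s)}) := by
  intro R
  obtain ⟨M, hM⟩ := exists_norm_le_of_continuousOn_apply isCompact_Icc hGsc
  refine ContinuousMap.isCompact_closure_of_equicontinuous
    (uniformEquicontinuous_volterra (R := R) hT hGnorm hM).equicontinuous (fun t => ?_) ?_
  · rw [← image_eq_range (fun g => volterra G g t)]
    exact totallyBounded_image_volterra hT hGnorm hM hGcpt t.2
  · rintro F ⟨g, hg, hgR, hF⟩
    exact ⟨⟨g, hg, hgR⟩, funext hF⟩

/-- the operator `(I g)(t) = ∫₀ᵗ G(t-s) g(s) ds` from `L²([0,T];W)` to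
`C([0,T];W)` is compact: it maps bounded sets of `L²` into relatively compact subsets of
`C([0,T];W)`. -/
theorem stmt_16 {W : Type*}
    [NormedAddCommGroup W] [NormedSpace ℝ W] [CompleteSpace W]
    (T : ℝ) (hT : 0 < T)
    (G : ℝ → W →L[ℝ] W)
    (hGsc : ∀ w : W, ContinuousOn (fun t : ℝ => G t w) (Set.Icc 0 T))
    (hG0 : G 0 = 1)
    (hGcpt : ∀ t ∈ Set.Ioc (0 : ℝ) T, IsCompactOperator (⇑(G t)))
    (hGnorm : ContinuousOn G (Set.Ioc 0 T)) :
    ∀ R : ℝ, IsCompact (closure {F : C(Set.Icc (0 : ℝ) T, W) |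
      ∃ g : ℝ → W, MemLp g 2 (volume.restrict (Set.Icc 0 T)) ∧
        (eLpNorm g 2 (volume.restrict (Set.Icc (0 : ℝ) T))).toReal ≤ R ∧
        ∀ t : Set.Icc (0 : ℝ) T,
          F t = ∫ s in (0 : ℝ)..(t : ℝ), G ((t : ℝ) - s) (g s)}) :=
  stmt_16_general T hT G hGsc hGcpt hGnorm
end

section
/- Let p ∈ [2,∞), λ > 0, and let g : [0,π] → ℝ be twice continuously differentiable with g(0) = g(π) = 0. Set h(ξ) = λ g(ξ) − g''(ξ). Then λ (∫₀^π |g(ξ)|^p dξ)^{1/p} ≤ (∫₀^π |h(ξ)|^p dξ)^{1/p}; that is, the resolvent of the one-dimensional Dirichlet Laplacian on L^p(0,π) satisfies λ‖g‖_{L^p(0,π)} ≤ ‖λg − g''‖_{L^p(0,π)}. -/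
open MeasureTheory Set

/-!
Test `λ g - g'' = h` against the duality map `J(g) = |g|^(p-2) g`. Since `g` vanishes at both
endpoints, integration by parts gives `-∫ g'' J(g) = (p-1) ∫ |g|^(p-2) |g'|^2 ≥ 0`, hence
`λ ‖g‖_p^p ≤ ∫ h J(g) ≤ ‖h‖_p ‖g‖_p^(p-1)` by Hölder, because `|J(g)|^(p/(p-1)) = |g|^p`.
For `p ≥ 2` the map `J` is `C¹`, which is what the integration by parts needs.
-/

theorem hasDerivAt_abs_rpow_sub_two_mul_self_of_ne_zero (p : ℝ) {t : ℝ} (ht : t ≠ 0) :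
    HasDerivAt (fun t : ℝ => |t| ^ (p - 2) * t) ((p - 1) * |t| ^ (p - 2)) t := by
  have hpow : HasDerivAt (fun t : ℝ => |t| ^ (p - 2))
      ((p - 2) * |t| ^ (p - 2 - 1) * SignType.sign t) t :=
    (Real.hasDerivAt_rpow_const (Or.inl (abs_ne_zero.mpr ht))).comp t (hasDerivAt_abs ht)
  refine (hpow.mul (hasDerivAt_id t)).congr_deriv ?_
  have hsign : (SignType.sign t : ℝ) * t = |t| := by
    rcases ht.lt_or_gt with h | h <;> simp [h, abs_of_neg, abs_of_pos]
  have hshift : |t| ^ (p - 2 - 1) * |t| = |t| ^ (p - 2) := by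
    rw [← Real.rpow_add_one (abs_ne_zero.mpr ht), sub_add_cancel]
  calc (p - 2) * |t| ^ (p - 2 - 1) * SignType.sign t * id t + |t| ^ (p - 2) * 1
      = (p - 2) * (|t| ^ (p - 2 - 1) * |t|) + |t| ^ (p - 2) := by rw [← hsign, id]; ring
    _ = (p - 1) * |t| ^ (p - 2) := by rw [hshift]; ring

theorem hasDerivAt_abs_rpow_sub_two_mul_self_zero {p : ℝ} (hp : 2 < p) :
    HasDerivAt (fun t : ℝ => |t| ^ (p - 2) * t) 0 0 := by
  have hcont : Continuous fun t : ℝ => |t| ^ (p - 2) :=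
    continuous_abs.rpow_const fun _ => Or.inr (by linarith)
  have hlim := (hcont.tendsto 0).mono_left (nhdsWithin_le_nhds (s := {(0 : ℝ)}ᶜ))
  rw [abs_zero, Real.zero_rpow (by linarith)] at hlim
  rw [hasDerivAt_iff_tendsto_slope]
  refine hlim.congr' ?_
  filter_upwards [self_mem_nhdsWithin] with x (hx : x ≠ 0)
  simp [slope_def_field, hx]

theorem hasDerivAt_abs_rpow_sub_two_mul_self {p : ℝ} (hp : 2 ≤ p) (t : ℝ) :
    HasDerivAt (fun t : ℝ => |t| ^ (p - 2) * t) ((p - 1) * |t| ^ (p - 2)) t := by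
  rcases eq_or_ne t 0 with rfl | ht
  · rcases hp.eq_or_lt with rfl | hp
    · simpa [show (2 : ℝ) - 1 = 1 by norm_num] using hasDerivAt_id' (0 : ℝ)
    · simpa [Real.zero_rpow (by linarith : p - 2 ≠ 0)] using
        hasDerivAt_abs_rpow_sub_two_mul_self_zero hp
  · exact hasDerivAt_abs_rpow_sub_two_mul_self_of_ne_zero p ht

theorem mul_abs_rpow_sub_two_mul_self {p : ℝ} (hp : p ≠ 0) (t : ℝ) :
    t * (|t| ^ (p - 2) * t) = |t| ^ p := by
  calc t * (|t| ^ (p - 2) * t) = |t| ^ (p - 2) * |t| ^ (2 : ℝ) := by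
        rw [Real.rpow_two, sq_abs]; ring
    _ = |t| ^ p := by
        rw [← Real.rpow_add' (abs_nonneg t) (by simpa using hp), sub_add_cancel]

theorem abs_abs_rpow_sub_two_mul_self {p : ℝ} (hp : p ≠ 1) (t : ℝ) :
    |(|t| ^ (p - 2) * t)| = |t| ^ (p - 1) := by
  rw [abs_mul, abs_of_nonneg (Real.rpow_nonneg (abs_nonneg t) _)]
  calc |t| ^ (p - 2) * |t| = |t| ^ (p - 2) * |t| ^ (1 : ℝ) := by rw [Real.rpow_one]
    _ = |t| ^ (p - 1) := by
        rw [← Real.rpow_add' (abs_nonneg t) (by contrapose! hp; linarith)]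
        ring_nf

theorem mul_rpow_one_div_le_of_mul_le_mul_rpow {p q c I H : ℝ} (hpq : p.HolderConjugate q)
    (hI : 0 ≤ I) (hH : 0 ≤ H) (h : c * I ≤ H * I ^ (1 / q)) : c * I ^ (1 / p) ≤ H := by
  rcases hI.eq_or_lt with rfl | hI
  · rwa [Real.zero_rpow (one_div_pos.mpr hpq.pos).ne', mul_zero]
  · have hsplit : I = I ^ (1 / p) * I ^ (1 / q) := by
      rw [← Real.rpow_add hI, one_div, one_div, hpq.inv_add_inv_eq_one, Real.rpow_one]
    refine le_of_mul_le_mul_right ?_ (Real.rpow_pos_of_pos hI (1 / q))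
    rwa [mul_assoc, ← hsplit]

section Interval

variable {a b : ℝ}

theorem ContinuousOn.memLp_restrict_Ioc {f : ℝ → ℝ} (hf : ContinuousOn f (Icc a b))
    (r : ENNReal) : MemLp f r (volume.restrict (Ioc a b)) := by
  obtain ⟨C, hC⟩ := isCompact_Icc.exists_bound_of_continuousOn hf
  refine MemLp.of_bound ((hf.mono Ioc_subset_Icc_self).aestronglyMeasurable measurableSet_Ioc)
    C ?_
  filter_upwards [ae_restrict_mem measurableSet_Ioc] with x hx
  exact hC x (Ioc_subset_Icc_self hx)

theorem intervalIntegral.integral_mul_le_Lp_mul_Lq_of_continuousOn {p q : ℝ}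
    (hab : a ≤ b) (hpq : p.HolderConjugate q) {f g : ℝ → ℝ}
    (hf : ContinuousOn f (Icc a b)) (hg : ContinuousOn g (Icc a b))
    (hf0 : ∀ x, 0 ≤ f x) (hg0 : ∀ x, 0 ≤ g x) :
    ∫ x in a..b, f x * g x ≤
      (∫ x in a..b, f x ^ p) ^ (1 / p) * (∫ x in a..b, g x ^ q) ^ (1 / q) := by
  simp only [intervalIntegral.integral_of_le hab]
  exact integral_mul_le_Lp_mul_Lq_of_nonneg hpq (.of_forall hf0) (.of_forall hg0)
    (hf.memLp_restrict_Ioc _) (hg.memLp_restrict_Ioc _)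

theorem integral_mul_abs_rpow_sub_two_mul_self_le {p q : ℝ} (hab : a ≤ b)
    (hpq : p.HolderConjugate q) {f u : ℝ → ℝ}
    (hf : ContinuousOn f (Icc a b)) (hu : ContinuousOn u (Icc a b)) :
    ∫ x in a..b, f x * (|u x| ^ (p - 2) * u x) ≤
      (∫ x in a..b, |f x| ^ p) ^ (1 / p) * (∫ x in a..b, |u x| ^ p) ^ (1 / q) := by
  have hdual : ∀ x, (|u x| ^ (p - 1)) ^ q = |u x| ^ p := fun x => by
    rw [← Real.rpow_mul (abs_nonneg _), hpq.sub_one_mul_conj]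
  calc ∫ x in a..b, f x * (|u x| ^ (p - 2) * u x)
      ≤ ∫ x in a..b, |f x * (|u x| ^ (p - 2) * u x)| :=
        (le_abs_self _).trans (intervalIntegral.abs_integral_le_integral_abs hab)
    _ = ∫ x in a..b, |f x| * |u x| ^ (p - 1) := by
        simp only [abs_mul (f _), abs_abs_rpow_sub_two_mul_self hpq.lt.ne']
    _ ≤ _ := by
        simpa only [hdual] using
          intervalIntegral.integral_mul_le_Lp_mul_Lq_of_continuousOn hab hpq hf.abs
            (hu.abs.rpow_const fun _ _ => Or.inr (sub_nonneg.mpr hpq.lt.le))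
            (fun x => abs_nonneg _) (fun x => Real.rpow_nonneg (abs_nonneg _) _)

theorem ContDiffOn.hasDerivAt_derivWithin_Icc {n : WithTop ℕ∞} {g : ℝ → ℝ}
    (hg : ContDiffOn ℝ n g (Icc a b)) (hn : n ≠ 0) {x : ℝ} (hx : x ∈ Ioo a b) :
    HasDerivAt g (derivWithin g (Icc a b) x) x :=
  (hg.differentiableOn hn x (Ioo_subset_Icc_self hx)).hasDerivWithinAt.hasDerivAt
    (Icc_mem_nhds hx.1 hx.2)

theorem integral_iteratedDerivWithin_two_mul_comp_nonpos (hab : a < b) {g : ℝ → ℝ}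
    (hg : ContDiffOn ℝ 2 g (Icc a b)) (ha : g a = 0) (hb : g b = 0) {φ φ' : ℝ → ℝ}
    (hφ : ∀ t, HasDerivAt φ (φ' t) t) (hφ' : Continuous φ') (hφ'_nonneg : ∀ t, 0 ≤ φ' t)
    (hφ0 : φ 0 = 0) :
    ∫ x in a..b, iteratedDerivWithin 2 g (Icc a b) x * φ (g x) ≤ 0 := by
  set g' := derivWithin g (Icc a b)
  have hs : UniqueDiffOn ℝ (Icc a b) := uniqueDiffOn_Icc hab
  have hg' : ContDiffOn ℝ 1 g' (Icc a b) := hg.derivWithin hs (by norm_num)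
  have hg'' : iteratedDerivWithin 2 g (Icc a b) = derivWithin g' (Icc a b) := by
    rw [iteratedDerivWithin_succ', iteratedDerivWithin_one]
  have hφc : Continuous φ := continuous_iff_continuousAt.2 fun t => (hφ t).continuousAt
  have hI : uIcc a b = Icc a b := uIcc_of_le hab.le
  have hIoo : Ioo (min a b) (max a b) = Ioo a b := by rw [min_eq_left hab.le, max_eq_right hab.le]
  have hibp : ∫ x in a..b, φ (g x) * derivWithin g' (Icc a b) x =
      φ (g b) * g' b - φ (g a) * g' a - ∫ x in a..b, φ' (g x) * g' x * g' x :=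
    intervalIntegral.integral_mul_deriv_eq_deriv_mul_of_hasDerivAt
      (hI ▸ hφc.comp_continuousOn hg.continuousOn) (hI ▸ hg'.continuousOn)
      (hIoo ▸ fun x hx => (hφ (g x)).comp x (hg.hasDerivAt_derivWithin_Icc two_ne_zero hx))
      (hIoo ▸ fun x hx => hg'.hasDerivAt_derivWithin_Icc one_ne_zero hx)
      ((hφ'.comp_continuousOn hg.continuousOn).mul hg'.continuousOn
        |>.intervalIntegrable_of_Icc hab.le)
      ((hg'' ▸ hg.continuousOn_iteratedDerivWithin (by norm_num) hs)
        |>.intervalIntegrable_of_Icc hab.le)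
  have hgrad : 0 ≤ ∫ x in a..b, φ' (g x) * g' x * g' x :=
    intervalIntegral.integral_nonneg hab.le fun x _ => by
      rw [mul_assoc]; exact mul_nonneg (hφ'_nonneg _) (mul_self_nonneg _)
  simp only [hg'', mul_comm (derivWithin g' _ _)]
  rw [hibp, ha, hb, hφ0]
  linarith

theorem mul_integral_abs_rpow_le_integral_sub_iteratedDerivWithin_two_mul (hab : a < b)
    {p : ℝ} (hp : 2 ≤ p) (lam : ℝ) {g : ℝ → ℝ} (hg : ContDiffOn ℝ 2 g (Icc a b))
    (ha : g a = 0) (hb : g b = 0) :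
    lam * ∫ x in a..b, |g x| ^ p ≤
      ∫ x in a..b, (lam * g x - iteratedDerivWithin 2 g (Icc a b) x) * (|g x| ^ (p - 2) * g x) := by
  set g'' := iteratedDerivWithin 2 g (Icc a b)
  have hJ := hasDerivAt_abs_rpow_sub_two_mul_self hp
  have hJc : Continuous fun t : ℝ => |t| ^ (p - 2) * t :=
    continuous_iff_continuousAt.2 fun t => (hJ t).continuousAt
  have hgc := hg.continuousOn
  have hdiss : ∫ x in a..b, g'' x * (|g x| ^ (p - 2) * g x) ≤ 0 :=
    integral_iteratedDerivWithin_two_mul_comp_nonpos hab hg ha hb hJ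
      (continuous_const.mul (continuous_abs.rpow_const fun _ => Or.inr (by linarith)))
      (fun t => mul_nonneg (by linarith) (Real.rpow_nonneg (abs_nonneg t) _)) (by simp)
  have hpair : ∫ x in a..b, (lam * g x - g'' x) * (|g x| ^ (p - 2) * g x) =
      lam * (∫ x in a..b, |g x| ^ p) - ∫ x in a..b, g'' x * (|g x| ^ (p - 2) * g x) := by
    simp only [sub_mul, mul_assoc, mul_abs_rpow_sub_two_mul_self (by linarith : p ≠ 0)]
    rw [intervalIntegral.integral_sub, intervalIntegral.integral_const_mul]
    · exact ((continuous_abs.rpow_const fun _ => Or.inr (by linarith)).comp_continuousOn hgc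
        |>.intervalIntegrable_of_Icc hab.le).const_mul lam
    · exact (hg.continuousOn_iteratedDerivWithin le_rfl (uniqueDiffOn_Icc hab)
        |>.mul (hJc.comp_continuousOn hgc)).intervalIntegrable_of_Icc hab.le
  linarith

end Interval

theorem stmt_19_general (p : ℝ) (hp : 2 ≤ p) (lam : ℝ)
    (g : ℝ → ℝ) (hg : ContDiffOn ℝ 2 g (Set.Icc 0 Real.pi))
    (hg0 : g 0 = 0) (hgpi : g Real.pi = 0) :
    lam * (∫ ξ in (0 : ℝ)..Real.pi, |g ξ| ^ p) ^ (1 / p) ≤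
      (∫ ξ in (0 : ℝ)..Real.pi,
        |lam * g ξ - iteratedDerivWithin 2 g (Set.Icc 0 Real.pi) ξ| ^ p) ^ (1 / p) := by
  have hq : p.HolderConjugate (p / (p - 1)) := .conjExponent (by linarith)
  have hnonneg (f : ℝ → ℝ) : 0 ≤ ∫ x in 0..Real.pi, |f x| ^ p :=
    intervalIntegral.integral_nonneg Real.pi_pos.le fun x _ => by positivity
  refine mul_rpow_one_div_le_of_mul_le_mul_rpow hq (hnonneg g)
    (Real.rpow_nonneg (hnonneg _) _) ?_
  have hg''c : ContinuousOn (iteratedDerivWithin 2 g (Icc 0 Real.pi)) (Icc 0 Real.pi) :=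
    hg.continuousOn_iteratedDerivWithin le_rfl (uniqueDiffOn_Icc Real.pi_pos)
  exact (mul_integral_abs_rpow_le_integral_sub_iteratedDerivWithin_two_mul Real.pi_pos hp lam hg
    hg0 hgpi).trans (integral_mul_abs_rpow_sub_two_mul_self_le Real.pi_pos.le hq
      ((continuousOn_const.mul hg.continuousOn).sub hg''c) hg.continuousOn)

/-- resolvent estimate for the one-dimensional Dirichlet Laplacian on
`L^p(0,π)`, `p ∈ [2,∞)`: for `λ > 0` and `g` twice continuously differentiable on `[0,π]`
with `g(0) = g(π) = 0`, setting `h = λg - g''`, one has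
`λ ‖g‖_{L^p(0,π)} ≤ ‖h‖_{L^p(0,π)}`. -/
theorem stmt_19 (p : ℝ) (hp : 2 ≤ p) (lam : ℝ) (hlam : 0 < lam)
    (g : ℝ → ℝ) (hg : ContDiffOn ℝ 2 g (Set.Icc 0 Real.pi))
    (hg0 : g 0 = 0) (hgpi : g Real.pi = 0) :
    lam * (∫ ξ in (0 : ℝ)..Real.pi, |g ξ| ^ p) ^ (1 / p) ≤
      (∫ ξ in (0 : ℝ)..Real.pi,
        |lam * g ξ - iteratedDerivWithin 2 g (Set.Icc 0 Real.pi) ξ| ^ p) ^ (1 / p) :=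
  stmt_19_general p hp lam g hg hg0 hgpi
end
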